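/- Let Γ be a group generated by a finite symmetric set S and Λ a group generated by a finite symmetric set T, each equipped with a sofic approximation whose approximating sets are connected as labelled graphs, and let (X, d_X) and (X′, d_{X′}) be the associated spaces of graphs with admissible metrics. If there is a coarse equivalence f : X → X′, then Γ and Λ are quasi-isometric: there exist F : Γ → Λ, C ≥ 1 and K ≥ 0 such that (1/C)·|g⁻¹h|_S − K ≤ |F(g)⁻¹F(h)|_T ≤ C·|g⁻¹h|_S + K for all g, h ∈ Γ, and for every λ ∈ Λ there is g ∈ Γ with |F(g)⁻¹λ|_T ≤ K. -/

import Mathlib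

open scoped BigOperators symmDiff Classical

universe u v

/-- A sofic approximation of a group `Γ` generated by a finite symmetric set `S`. -/
structure SoficApprox (Γ : Type u) [Group Γ] (S : Finset Γ) where
  F : ℕ → Finset Γ
  F_mono : Monotone F
  F_one : ∀ i, (1 : Γ) ∈ F i
  F_exhausts : ∀ g : Γ, ∃ i, g ∈ F i
  eps : ℕ → ℝ
  eps_pos : ∀ i, 0 < eps i
  eps_lim : Filter.Tendsto eps Filter.atTop (nhds 0)
  X : ℕ → Type
  finX : ∀ i, Finite (X i)
  neX : ∀ i, Nonempty (X i)
  sigma : (i : ℕ) → Γ → Equiv.Perm (X i)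
  Y : (i : ℕ) → Set (X i)
  Y_large : ∀ i, (1 - eps i) * (Nat.card (X i) : ℝ) ≤ ((Y i).ncard : ℝ)
  sigma_mul : ∀ i, ∀ g ∈ F i, ∀ h ∈ F i, ∀ y ∈ Y i, sigma i g (sigma i h y) = sigma i (g * h) y
  sigma_free : ∀ i, ∀ g ∈ F i, g ≠ 1 → ∀ y ∈ Y i, sigma i g y ≠ y

namespace SoficApprox

variable {Γ : Type u} [Group Γ] {S : Finset Γ}

/-- The total space (space of graphs) `X = ⨆ i, X i`. -/
abbrev Total (A : SoficApprox Γ S) : Type := Σ i, A.X i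

/-- The bijection `σ(g)` of the total space acting as `σ_i(g)` on each `X i`. -/
def perm (A : SoficApprox Γ S) (g : Γ) : Equiv.Perm A.Total :=
  Equiv.sigmaCongrRight fun i => A.sigma i g

/-- The continuous extension `σ̄(g)` of `σ(g)` to the Stone–Čech compactification. -/
def permBar (A : SoficApprox Γ S) (g : Γ) : Ultrafilter A.Total → Ultrafilter A.Total :=
  Ultrafilter.map (A.perm g)

/-- The union `Y = ⨆ i, Y i` inside the total space. -/
def Ytot (A : SoficApprox Γ S) : Set A.Total := {p | p.2 ∈ A.Y p.1}

/-- `∂Y`: free ultrafilters containing `Y`. -/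
def bdY (A : SoficApprox Γ S) : Set (Ultrafilter A.Total) :=
  {η | (∀ p : A.Total, η ≠ pure p) ∧ A.Ytot ∈ η}

/-- The core `Z = ⋂_{g ∈ Γ} σ̄(g)''(∂Y)` of the sofic boundary. -/
def core (A : SoficApprox Γ S) : Set (Ultrafilter A.Total) :=
  ⋂ g : Γ, A.permBar g '' A.bdY

/-- The `S`-labelled graph structure on `X i`, with edges `{x, σ_i(s)(x)}` for `s ∈ S`. -/
def graph (A : SoficApprox Γ S) (i : ℕ) : SimpleGraph (A.X i) where
  Adj x y := x ≠ y ∧ ∃ s ∈ S, A.sigma i s x = y ∨ A.sigma i s y = x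
  symm := ⟨fun x y h => ⟨h.1.symm, by obtain ⟨s, hs, h'⟩ := h.2; exact ⟨s, hs, h'.symm⟩⟩⟩
  loopless := ⟨fun x h => h.1 rfl⟩

/-- An admissible metric on the total space: a metric restricting to the edge-path
metric on each `X i` and with distances between distinct components tending to `∞`. -/
def Admissible (A : SoficApprox Γ S) (d : A.Total → A.Total → ℝ) : Prop :=
  (∀ p q, d p q = d q p) ∧
  (∀ p q r, d p r ≤ d p q + d q r) ∧
  (∀ p q, d p q = 0 ↔ p = q) ∧
  (∀ p q, 0 ≤ d p q) ∧
  (∀ (i : ℕ) (x y : A.X i), d ⟨i, x⟩ ⟨i, y⟩ = ((A.graph i).dist x y : ℝ)) ∧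
  (∀ R : ℝ, ∃ N : ℕ, ∀ i j : ℕ, i ≠ j → N ≤ i + j →
      ∀ (x : A.X i) (y : A.X j), R < d ⟨i, x⟩ ⟨j, y⟩)

/-- The entourage `E_R` viewed inside `βX × βX`. -/
def ER (A : SoficApprox Γ S) (d : A.Total → A.Total → ℝ) (R : ℝ) :
    Set (Ultrafilter A.Total × Ultrafilter A.Total) :=
  {p | ∃ a b : A.Total, d a b ≤ R ∧ p = (pure a, pure b)}

end SoficApprox

/-- Word length of `g` with respect to the generating set `S`. -/
noncomputable def wordLength {Γ : Type u} [Group Γ] (S : Finset Γ) (g : Γ) : ℕ :=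
  sInf {n | ∃ l : List Γ, (∀ x ∈ l, x ∈ S) ∧ l.length = n ∧ l.prod = g}

/-- Word length of an element of a free group. -/
noncomputable def fgLength {α : Type v} (w : FreeGroup α) : ℕ :=
  sInf {n | ∃ l : List (α × Bool), l.length = n ∧ FreeGroup.mk l = w}

/-- The canonical homomorphism `F_S → Γ` extending the inclusion `S ↪ Γ`. -/
noncomputable def pihom {Γ : Type u} [Group Γ] (S : Finset Γ) : FreeGroup ↥S →* Γ :=
  FreeGroup.lift fun s => (s : Γ)

/-- The homomorphism `τ : F_S → Sym(X)` with `τ(s) = σ(s)` for `s ∈ S`. -/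
noncomputable def SoficApprox.tau {Γ : Type u} [Group Γ] {S : Finset Γ}
    (A : SoficApprox Γ S) : FreeGroup ↥S →* Equiv.Perm A.Total :=
  FreeGroup.lift fun s => A.perm (s : Γ)

/-!
For large `i`, a point `y ∈ Y i` sees around itself, up to any fixed radius, an isometric
copy of a ball of the Cayley graph of `(Γ, S)`: its orbit `g ↦ σ_i(g) y`. The images under `f`
of the components far out lie in single components of `X'`, and `f` has uniformly bounded
fibres, so a double count against `|Y i| ≥ (1 - ε_i) |X i|` produces, arbitrarily far out,
good points `x ∈ Y i` and `z ∈ Y' j` with `f x` close to `z`. Reading `f` off on the orbits of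
`x` and `z` gives quasi-isometries between the balls of radius `n` of `Γ` and `Λ` with
constants independent of `n`; since balls are finite, an ultrafilter limit of these maps is a
quasi-isometry `Γ → Λ`.
-/

open Filter Finset

structure IsSymmGenerating {Γ : Type u} [Group Γ] (S : Finset Γ) : Prop where
  inv_mem : ∀ s ∈ S, s⁻¹ ∈ S
  closure_eq_top : Subgroup.closure (S : Set Γ) = ⊤

section WordLength

variable {Γ : Type u} [Group Γ] {S : Finset Γ}

theorem wordLength_le_length {l : List Γ} (hl : ∀ x ∈ l, x ∈ S) :
    wordLength S l.prod ≤ l.length :=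
  Nat.sInf_le ⟨l, hl, rfl, rfl⟩

theorem wordLength_one : wordLength S (1 : Γ) = 0 :=
  Nat.le_zero.1 (wordLength_le_length (l := []) (by simp))

theorem wordLength_le_one {s : Γ} (hs : s ∈ S) : wordLength S s ≤ 1 := by
  simpa using wordLength_le_length (l := [s]) (by simpa using hs)

theorem IsSymmGenerating.exists_list (hS : IsSymmGenerating S) (g : Γ) :
    ∃ l : List Γ, (∀ x ∈ l, x ∈ S) ∧ l.length = wordLength S g ∧ l.prod = g := by
  refine Nat.sInf_mem (s := {n | ∃ l : List Γ, (∀ x ∈ l, x ∈ S) ∧ l.length = n ∧ l.prod = g}) ?_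
  have hunion : (S : Set Γ) ∪ (S : Set Γ)⁻¹ = S :=
    Set.union_eq_left.2 fun x hx => by simpa using hS.inv_mem _ hx
  have hg : g ∈ Submonoid.closure (S : Set Γ) := by
    rw [← hunion, ← Subgroup.closure_toSubmonoid, hS.closure_eq_top]; trivial
  obtain ⟨l, hl, rfl⟩ := Submonoid.exists_list_of_mem_closure hg
  exact ⟨l.length, l, hl, rfl, rfl⟩

theorem IsSymmGenerating.wordLength_mul_le (hS : IsSymmGenerating S) (g h : Γ) :
    wordLength S (g * h) ≤ wordLength S g + wordLength S h := by
  obtain ⟨l₁, hl₁, hlen₁, rfl⟩ := hS.exists_list g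
  obtain ⟨l₂, hl₂, hlen₂, rfl⟩ := hS.exists_list h
  rw [← hlen₁, ← hlen₂, ← List.length_append, ← List.prod_append]
  exact wordLength_le_length fun x hx => (List.mem_append.1 hx).elim (hl₁ x) (hl₂ x)

theorem IsSymmGenerating.wordLength_inv_le (hS : IsSymmGenerating S) (g : Γ) :
    wordLength S g⁻¹ ≤ wordLength S g := by
  obtain ⟨l, hl, hlen, rfl⟩ := hS.exists_list g
  rw [← hlen, List.prod_inv_reverse, ← List.length_map (f := fun x => x⁻¹),
    ← List.length_reverse]
  refine wordLength_le_length fun x hx => ?_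
  obtain ⟨y, hy, rfl⟩ := List.mem_map.1 (List.mem_reverse.1 hx)
  exact hS.inv_mem y (hl y hy)

theorem IsSymmGenerating.wordLength_inv (hS : IsSymmGenerating S) (g : Γ) :
    wordLength S g⁻¹ = wordLength S g :=
  (hS.wordLength_inv_le g).antisymm (by simpa using hS.wordLength_inv_le g⁻¹)

theorem IsSymmGenerating.finite_setOf_wordLength_le (hS : IsSymmGenerating S) (n : ℕ) :
    {g : Γ | wordLength S g ≤ n}.Finite := by
  refine ((List.finite_length_le S n).image fun l => (l.map (↑)).prod).subset fun g hg => ?_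
  obtain ⟨l, hl, hlen, rfl⟩ := hS.exists_list g
  refine ⟨l.attach.map fun x => ⟨x.1, hl x.1 x.2⟩, ?_, ?_⟩
  · simpa [hlen] using hg
  · simp [List.map_attach_eq_pmap]

end WordLength

namespace SimpleGraph

variable {V W : Type*} {G : SimpleGraph V}

theorem Walk.le_mul_length {δ : V → V → ℝ} {C : ℝ}
    (htri : ∀ x y z, δ x z ≤ δ x y + δ y z) (hself : ∀ x, δ x x = 0)
    (hadj : ∀ x y, G.Adj x y → δ x y ≤ C) {u v : V} (w : G.Walk u v) :
    δ u v ≤ C * w.length := by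
  induction w with
  | nil => simp [hself]
  | @cons x y z h _ ih =>
    rw [Walk.length_cons, Nat.cast_succ, mul_add_one]
    linarith [htri x y z, hadj x y h]

theorem Connected.le_mul_dist (hG : G.Connected) {δ : V → V → ℝ} {C : ℝ}
    (htri : ∀ x y z, δ x z ≤ δ x y + δ y z) (hself : ∀ x, δ x x = 0)
    (hadj : ∀ x y, G.Adj x y → δ x y ≤ C) (u v : V) :
    δ u v ≤ C * G.dist u v := by
  obtain ⟨w, hw⟩ := hG.exists_walk_length_eq_dist u v
  simpa [hw] using w.le_mul_length htri hself hadj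

theorem Connected.le_mul_dist_add_one (hG : G.Connected) {δ : W → W → ℝ}
    (htri : ∀ p q r, δ p r ≤ δ p q + δ q r) {near : W → V → Prop} (hnear : ∀ v, ∃ p, near p v)
    {M : ℝ} (hM : ∀ p q u v, near p u → near q v → G.dist u v ≤ 1 → δ p q ≤ M)
    {p q : W} {u v : V} (hp : near p u) (hq : near q v) :
    δ p q ≤ M * (G.dist u v + 1) := by
  obtain ⟨w, hw⟩ := hG.exists_walk_length_eq_dist u v
  rw [← hw]
  clear hw
  induction w generalizing p with
  | nil => simpa using hM p q _ _ hp hq (by simp)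
  | @cons u u' v h w ih =>
    obtain ⟨p', hp'⟩ := hnear u'
    have hstep := hM p p' u u' hp hp' (dist_eq_one_iff_adj.2 h).le
    rw [Walk.length_cons, Nat.cast_succ]
    linarith [htri p p' q, ih hp' hq]

theorem Connected.card_filter_dist_le [Fintype V] [DecidableRel G.Adj] (hG : G.Connected)
    {k : ℕ} (hdeg : ∀ v, G.degree v ≤ k) (x : V) (R : ℕ) :
    #{y | G.dist x y ≤ R} ≤ (k + 1) ^ R := by
  induction R generalizing x with
  | zero =>
    refine (card_le_card fun y hy => ?_).trans (card_singleton x).le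
    simpa [hG.dist_eq_zero_iff, eq_comm] using hy
  | succ R ih =>
    have hsub : ({y | G.dist x y ≤ R + 1} : Finset V) ⊆
        (insert x (G.neighborFinset x)).biUnion fun v => {y | G.dist v y ≤ R} := by
      intro y hy
      obtain ⟨w, hw⟩ := hG.exists_walk_length_eq_dist x y
      simp only [mem_filter, mem_univ, true_and] at hy
      simp only [mem_biUnion, mem_insert, mem_neighborFinset, mem_filter, mem_univ, true_and]
      cases w with
      | nil => exact ⟨x, Or.inl rfl, by simp⟩
      | cons h w =>
        refine ⟨_, Or.inr h, (dist_le w).trans ?_⟩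
        rw [Walk.length_cons] at hw
        omega
    calc #{y | G.dist x y ≤ R + 1}
        ≤ #(insert x (G.neighborFinset x)) * (k + 1) ^ R :=
          (card_le_card hsub).trans (card_biUnion_le_card_mul _ _ _ fun v _ => ih v)
      _ ≤ (k + 1) * (k + 1) ^ R := by
          gcongr
          exact (card_insert_le _ _).trans (by simpa using hdeg x)
      _ = (k + 1) ^ (R + 1) := by ring

end SimpleGraph

theorem exists_le_of_tendsto_atTop {α β : Type*} {d : α → α → ℝ} {d' : β → β → ℝ}
    {f : α → β} {ρ : ℝ → ℝ} (hρ : Tendsto ρ atTop atTop)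
    (hf : ∀ p q, ρ (d p q) ≤ d' (f p) (f q)) (R : ℝ) :
    ∃ M, ∀ p q, d' (f p) (f q) ≤ R → d p q ≤ M := by
  obtain ⟨M, hM⟩ := eventually_atTop.1 (hρ.eventually_gt_atTop R)
  exact ⟨M, fun p q h => le_of_not_gt fun hlt => (hM _ hlt.le).not_ge ((hf p q).trans h)⟩

theorem exists_near_notMem_of_card {α β : Type*} [DecidableEq β] {P Bad : Finset α}
    {Q G : Finset β} {F : α → β} {near : α → β → Prop} [∀ p, DecidablePred (near p)]
    {a b : ℕ} {ε ε' : ℝ}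
    (hF : ∀ p ∈ P, F p ∈ Q) (hfib : ∀ q ∈ Q, #{p ∈ P | F p = q} ≤ a)
    (hbad : (#Bad : ℝ) ≤ ε * #P) (hG : (1 - ε') * #Q ≤ #G) (hQ : 0 < #Q)
    (hnear : ∀ q ∈ G, ∃ p ∈ P, near p q) (hnbhd : ∀ p ∈ Bad, #{q ∈ G | near p q} ≤ b)
    (hε : 0 ≤ ε) (hlt : ε * a * b < 1 - ε') :
    ∃ q ∈ G, ∃ p ∈ P, p ∉ Bad ∧ near p q := by
  by_contra! hfar
  have hcover : G ⊆ Bad.biUnion fun p => {q ∈ G | near p q} := fun q hq => by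
    obtain ⟨p, hp, hpq⟩ := hnear q hq
    by_cases hpB : p ∈ Bad
    · exact mem_biUnion.2 ⟨p, hpB, mem_filter.2 ⟨hq, hpq⟩⟩
    · exact absurd hpq (hfar q hq p hp hpB)
  have hGB : (#G : ℝ) ≤ #Bad * b :=
    mod_cast (card_le_card hcover).trans (card_biUnion_le_card_mul _ _ _ hnbhd)
  have hPQ : (#P : ℝ) ≤ a * #Q := mod_cast card_le_mul_card_image_of_maps_to hF a hfib
  have hQ' : (0 : ℝ) < #Q := mod_cast hQ
  have : (1 - ε') * #Q ≤ ε * a * b * #Q := by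
    calc (1 - ε') * #Q ≤ #Bad * b := hG.trans hGB
      _ ≤ ε * #P * b := by gcongr
      _ ≤ ε * (a * #Q) * b := by gcongr
      _ = ε * a * b * #Q := by ring
  exact (lt_irrefl _ ((mul_lt_mul_of_pos_right hlt hQ').trans_le this))

/-- The bounds on `F 1` and on the witnesses `g` keep the maps for all `n` inside a compact
family. -/
structure IsQuasiIsometryOn {Γ : Type u} {Λ : Type v} [Group Γ] [Group Λ] (S : Finset Γ)
    (T : Finset Λ) (n : ℕ) (C M K : ℝ) (F : Γ → Λ) : Prop where
  le_mul : ∀ g h, wordLength S g ≤ n → wordLength S h ≤ n →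
    (wordLength T ((F g)⁻¹ * F h) : ℝ) ≤ C * wordLength S (g⁻¹ * h)
  le_mul_add_one : ∀ g h, wordLength S g ≤ n → wordLength S h ≤ n →
    (wordLength S (g⁻¹ * h) : ℝ) ≤ M * (wordLength T ((F g)⁻¹ * F h) + 1)
  wordLength_one_le : (wordLength T (F 1) : ℝ) ≤ K
  exists_near : ∀ l, wordLength T l ≤ n → ∃ g,
    (wordLength S g : ℝ) ≤ M * (wordLength T l + 1) ∧ (wordLength T ((F g)⁻¹ * l) : ℝ) ≤ K

namespace IsQuasiIsometryOn

variable {Γ : Type u} {Λ : Type v} [Group Γ] [Group Λ] {S : Finset Γ} {T : Finset Λ}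
  {n : ℕ} {C M K : ℝ} {F : Γ → Λ}

theorem wordLength_le (hF : IsQuasiIsometryOn S T n C M K F) (hT : IsSymmGenerating T) {g : Γ}
    (hg : wordLength S g ≤ n) : (wordLength T (F g) : ℝ) ≤ K + C * wordLength S g := by
  have h := hF.le_mul 1 g (by simp [wordLength_one]) hg
  rw [inv_one, one_mul] at h
  have hmul : (wordLength T (F g) : ℝ) ≤ wordLength T (F 1) + wordLength T ((F 1)⁻¹ * F g) := by
    exact_mod_cast mul_inv_cancel_left (F 1) (F g) ▸ hT.wordLength_mul_le _ _
  linarith [hF.wordLength_one_le]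

theorem exists_forall_wordLength_le (hF : ∀ n, IsQuasiIsometryOn S T n C M K F)
    (hM : 0 < M) (hK : 0 ≤ K) :
    ∃ C' K' : ℝ, 1 ≤ C' ∧ 0 ≤ K' ∧
      (∀ g h : Γ,
        (1 / C') * (wordLength S (g⁻¹ * h) : ℝ) - K' ≤ (wordLength T ((F g)⁻¹ * F h) : ℝ) ∧
        (wordLength T ((F g)⁻¹ * F h) : ℝ) ≤ C' * (wordLength S (g⁻¹ * h) : ℝ) + K') ∧
      (∀ l : Λ, ∃ g : Γ, (wordLength T ((F g)⁻¹ * l) : ℝ) ≤ K') := by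
  refine ⟨max (max C M) 1, K + 1, le_max_right _ _, by linarith, fun g h => ?_, fun l => ?_⟩
  · have hup := (hF _).le_mul g h (le_max_left _ (wordLength S h)) (le_max_right _ _)
    have hlo := (hF _).le_mul_add_one g h (le_max_left _ (wordLength S h)) (le_max_right _ _)
    have hd : (0 : ℝ) ≤ wordLength S (g⁻¹ * h) := Nat.cast_nonneg _
    have hCC : C ≤ max (max C M) 1 := (le_max_left _ _).trans (le_max_left _ _)
    have hMC : M ≤ max (max C M) 1 := (le_max_right _ _).trans (le_max_left _ _)
    constructor
    · calc 1 / max (max C M) 1 * wordLength S (g⁻¹ * h) - (K + 1)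
          ≤ 1 / M * wordLength S (g⁻¹ * h) - 1 := by
            gcongr
            linarith
        _ ≤ wordLength T ((F g)⁻¹ * F h) := by
            rw [one_div_mul_eq_div]
            linarith [(div_le_iff₀' hM).2 hlo]
    · nlinarith [mul_le_mul_of_nonneg_right hCC hd]
  · obtain ⟨g, -, hg⟩ := (hF _).exists_near l le_rfl
    exact ⟨g, by linarith⟩

end IsQuasiIsometryOn

section Limit

variable {Γ : Type u} {Λ : Type v} [Group Γ] [Group Λ] {S : Finset Γ} {T : Finset Λ}

theorem exists_forall_isQuasiIsometryOn (hS : IsSymmGenerating S) (hT : IsSymmGenerating T)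
    {C M K : ℝ} (h : ∀ n, ∃ F : Γ → Λ, IsQuasiIsometryOn S T n C M K F) :
    ∃ F : Γ → Λ, ∀ n, IsQuasiIsometryOn S T n C M K F := by
  choose Fn hFn using h
  let U := Ultrafilter.of (atTop : Filter ℕ)
  have hU : ∀ N : ℕ, ∀ᶠ m in U, N ≤ m := fun N => Ultrafilter.of_le _ (eventually_ge_atTop N)
  have hlim : ∀ g, ∃ l, ∀ᶠ m in U, Fn m g = l := by
    intro g
    obtain ⟨l, -, hl⟩ := (U.eventually_exists_mem_iff (P := fun l m => Fn m g = l)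
      (hT.finite_setOf_wordLength_le ⌈K + C * wordLength S g⌉₊)).1 <|
      (hU (wordLength S g)).mono fun m hm => ⟨Fn m g, Nat.cast_le.1 <|
        ((hFn m).wordLength_le hT hm).trans (Nat.le_ceil _), rfl⟩
    exact ⟨l, hl⟩
  choose F hF using hlim
  refine ⟨F, fun n => ⟨fun g h hg hh => ?_, fun g h hg hh => ?_, ?_, fun l hl => ?_⟩⟩
  · obtain ⟨m, hm, hmg, hmh⟩ := ((hU n).and ((hF g).and (hF h))).exists
    rw [← hmg, ← hmh]
    exact (hFn m).le_mul g h (hg.trans hm) (hh.trans hm)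
  · obtain ⟨m, hm, hmg, hmh⟩ := ((hU n).and ((hF g).and (hF h))).exists
    rw [← hmg, ← hmh]
    exact (hFn m).le_mul_add_one g h (hg.trans hm) (hh.trans hm)
  · obtain ⟨m, hm⟩ := (hF 1).exists
    rw [← hm]
    exact (hFn m).wordLength_one_le
  · obtain ⟨g, -, hgl⟩ := (U.eventually_exists_mem_iff
      (P := fun g m => (wordLength S g : ℝ) ≤ M * (wordLength T l + 1) ∧
        (wordLength T ((Fn m g)⁻¹ * l) : ℝ) ≤ K)
      (hS.finite_setOf_wordLength_le ⌈M * (wordLength T l + 1)⌉₊)).1 <|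
      (hU n).mono fun m hm => by
        obtain ⟨g, hg, hgl⟩ := (hFn m).exists_near l (hl.trans hm)
        exact ⟨g, Nat.cast_le.1 (hg.trans (Nat.le_ceil _)), hg, hgl⟩
    obtain ⟨m, ⟨hg, hgl⟩, hmg⟩ := (hgl.and (hF g)).exists
    exact ⟨g, hg, hmg ▸ hgl⟩

end Limit

namespace SoficApprox

variable {Γ : Type u} [Group Γ] {S : Finset Γ} (A : SoficApprox Γ S)

instance (i : ℕ) : Finite (A.X i) := A.finX i

noncomputable instance (i : ℕ) : Fintype (A.X i) := Fintype.ofFinite _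

instance (i : ℕ) : Nonempty (A.X i) := A.neX i

def ContainsBall (i R : ℕ) : Prop := ∀ g : Γ, wordLength S g ≤ R → g ∈ A.F i

def IsolatedAt (d : A.Total → A.Total → ℝ) (i : ℕ) (r : ℝ) : Prop :=
  ∀ (x : A.X i) (q : A.Total), d ⟨i, x⟩ q ≤ r → q.1 = i

theorem eventually_containsBall (hS : IsSymmGenerating S) (R : ℕ) :
    ∀ᶠ i in atTop, A.ContainsBall i R := by
  refine ((hS.finite_setOf_wordLength_le R).eventually_all (p := fun g i => g ∈ A.F i)).2
    fun g _ => ?_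
  obtain ⟨i₀, hi₀⟩ := A.F_exhausts g
  exact eventually_atTop.2 ⟨i₀, fun i hi => A.F_mono hi hi₀⟩

variable {A}

theorem sigma_one_apply {i : ℕ} {y : A.X i} (hy : y ∈ A.Y i) : A.sigma i 1 y = y :=
  (A.sigma i 1).injective (by simpa using A.sigma_mul i 1 (A.F_one i) 1 (A.F_one i) y hy)

theorem degree_graph_le (i : ℕ) (x : A.X i) : (A.graph i).degree x ≤ 2 * #S := by
  rw [← SimpleGraph.card_neighborFinset_eq_degree, two_mul]
  refine (card_le_card fun y hy => ?_).trans ((card_union_le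
    (S.image fun s => A.sigma i s x) (S.image fun s => (A.sigma i s).symm x)).trans
    (add_le_add card_image_le card_image_le))
  obtain ⟨-, s, hs, h | h⟩ := (SimpleGraph.mem_neighborFinset _ _ _).1 hy
  · exact mem_union_left _ (mem_image.2 ⟨s, hs, h⟩)
  · exact mem_union_right _ (mem_image.2 ⟨s, hs, (Equiv.symm_apply_eq _).2 h.symm⟩)

variable {d : A.Total → A.Total → ℝ}

namespace Admissible

theorem comm (hd : A.Admissible d) (p q : A.Total) : d p q = d q p := hd.1 p q

theorem triangle (hd : A.Admissible d) (p q r : A.Total) : d p r ≤ d p q + d q r :=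
  hd.2.1 p q r

theorem self_eq_zero (hd : A.Admissible d) (p : A.Total) : d p p = 0 := (hd.2.2.1 p p).2 rfl

theorem dist_mk (hd : A.Admissible d) (i : ℕ) (x y : A.X i) :
    d ⟨i, x⟩ ⟨i, y⟩ = (A.graph i).dist x y :=
  hd.2.2.2.2.1 i x y

theorem eventually_isolatedAt (hd : A.Admissible d) (r : ℝ) :
    ∀ᶠ i in atTop, A.IsolatedAt d i r := by
  obtain ⟨N, hN⟩ := hd.2.2.2.2.2 r
  filter_upwards [eventually_ge_atTop N] with i hi x ⟨j, y⟩ hq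
  by_contra hne
  exact (hN i j (Ne.symm hne) (by omega) x y).not_ge hq

theorem finite_image_fst (hd : A.Admissible d) {s : Set A.Total} {R : ℝ}
    (hs : ∀ p ∈ s, ∀ q ∈ s, d p q ≤ R) : (Sigma.fst '' s).Finite := by
  obtain ⟨N, hN⟩ := hd.2.2.2.2.2 R
  by_cases hbig : ∃ p ∈ s, N ≤ p.1
  · obtain ⟨⟨i, x⟩, hp, hi : N ≤ i⟩ := hbig
    refine (Set.finite_singleton i).subset ?_
    rintro _ ⟨⟨j, y⟩, hq, rfl⟩
    by_contra hne
    exact (hN i j (Ne.symm hne) (by omega) x y).not_ge (hs _ hp _ hq)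
  · push Not at hbig
    exact (Set.finite_Iio N).subset (by rintro _ ⟨p, hp, rfl⟩; exact hbig p hp)

theorem card_filter_le (hd : A.Admissible d) (hconn : ∀ i, (A.graph i).Connected)
    {p₀ : A.Total} {r : ℝ} (hiso : A.IsolatedAt d p₀.1 r) (s : Finset A.Total) :
    #{p ∈ s | d p₀ p ≤ r} ≤ (2 * #S + 1) ^ ⌈r⌉₊ := by
  obtain ⟨i, x⟩ := p₀
  calc #{p ∈ s | d ⟨i, x⟩ p ≤ r}
      ≤ #(({y | (A.graph i).dist x y ≤ ⌈r⌉₊} : Finset (A.X i)).map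
          (Function.Embedding.sigmaMk i)) := by
        refine card_le_card fun p hp => ?_
        obtain ⟨-, hp⟩ := mem_filter.1 hp
        obtain ⟨j, y⟩ := p
        obtain rfl : j = i := hiso x _ hp
        rw [hd.dist_mk] at hp
        simpa using Nat.cast_le.1 (hp.trans (Nat.le_ceil r))
    _ ≤ (2 * #S + 1) ^ ⌈r⌉₊ := by
        rw [card_map]
        exact (hconn i).card_filter_dist_le (degree_graph_le i) x _

end Admissible

namespace ContainsBall

variable {i R : ℕ} {y : A.X i}

theorem sigma_mul (hball : A.ContainsBall i R) (hy : y ∈ A.Y i) {a b : Γ}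
    (ha : wordLength S a ≤ R) (hb : wordLength S b ≤ R) :
    A.sigma i a (A.sigma i b y) = A.sigma i (a * b) y :=
  A.sigma_mul i a (hball a ha) b (hball b hb) y hy

theorem sigma_injective (hS : IsSymmGenerating S) (hball : A.ContainsBall i R)
    (hy : y ∈ A.Y i) {a b : Γ} (hab : wordLength S a + wordLength S b ≤ R)
    (h : A.sigma i a y = A.sigma i b y) : a = b := by
  by_contra hne
  have ha' : wordLength S a⁻¹ ≤ R := by rw [hS.wordLength_inv]; omega
  have hab' : wordLength S (a⁻¹ * b) ≤ R :=
    (hS.wordLength_mul_le _ _).trans (by rw [hS.wordLength_inv]; omega)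
  refine A.sigma_free i _ (hball _ hab') (fun h' => hne (inv_mul_eq_one.1 h')) y hy ?_
  rw [← hball.sigma_mul hy ha' (by omega), ← h, hball.sigma_mul hy ha' (by omega),
    inv_mul_cancel, sigma_one_apply hy]

theorem dist_sigma_mul_le_one (hball : A.ContainsBall i R)
    (hy : y ∈ A.Y i) {a t : Γ} (ht : t ∈ S) (ha : wordLength S a + 1 ≤ R) :
    (A.graph i).dist (A.sigma i a y) (A.sigma i (t * a) y) ≤ 1 := by
  rw [← hball.sigma_mul hy ((wordLength_le_one ht).trans (by omega)) (by omega)]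
  by_cases hfix : A.sigma i t (A.sigma i a y) = A.sigma i a y
  · simp [hfix]
  · exact (SimpleGraph.dist_eq_one_iff_adj (G := A.graph i) |>.2
      ⟨Ne.symm hfix, t, ht, Or.inl rfl⟩).le

theorem exists_mem_eq_sigma_of_adj (hS : IsSymmGenerating S) (hball : A.ContainsBall i R)
    (hy : y ∈ A.Y i) {a : Γ} (ha : wordLength S a + 1 ≤ R) {v : A.X i}
    (hadj : (A.graph i).Adj (A.sigma i a y) v) : ∃ t ∈ S, v = A.sigma i (t * a) y := by
  obtain ⟨-, s, hs, h | h⟩ := hadj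
  · exact ⟨s, hs, by rw [← h, hball.sigma_mul hy ((wordLength_le_one hs).trans (by omega))
      (by omega)]⟩
  · have hs' := hS.inv_mem s hs
    refine ⟨s⁻¹, hs', (A.sigma i s).injective ?_⟩
    rw [h, hball.sigma_mul hy ((wordLength_le_one hs).trans (by omega))
      ((hS.wordLength_mul_le _ _).trans (by linarith [wordLength_le_one hs'])),
      mul_inv_cancel_left]

theorem exists_eq_sigma_of_walk (hS : IsSymmGenerating S) (hball : A.ContainsBall i R)
    (hy : y ∈ A.Y i) {u v : A.X i} (w : (A.graph i).Walk u v) {a : Γ}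
    (hu : u = A.sigma i a y) (hlen : wordLength S a + w.length + 1 ≤ R) :
    ∃ c, wordLength S c ≤ w.length ∧ v = A.sigma i (c * a) y := by
  induction w generalizing a with
  | nil => exact ⟨1, by simp [wordLength_one], by simpa using hu⟩
  | cons h w ih =>
    subst hu
    rw [SimpleGraph.Walk.length_cons] at hlen
    obtain ⟨t, ht, rfl⟩ := hball.exists_mem_eq_sigma_of_adj hS hy (by omega) h
    have hta : wordLength S (t * a) ≤ wordLength S a + 1 := by
      linarith [hS.wordLength_mul_le t a, wordLength_le_one ht]
    obtain ⟨c, hc, rfl⟩ := ih rfl (by omega)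
    refine ⟨c * t, ?_, by rw [mul_assoc]⟩
    rw [SimpleGraph.Walk.length_cons]
    linarith [hS.wordLength_mul_le c t, wordLength_le_one ht]

theorem dist_sigma_le (hS : IsSymmGenerating S) (hball : A.ContainsBall i R)
    (hy : y ∈ A.Y i) (hconn : (A.graph i).Connected) {a b : Γ}
    (hab : wordLength S a + wordLength S (b * a⁻¹) ≤ R) :
    (A.graph i).dist (A.sigma i a y) (A.sigma i b y) ≤ wordLength S (b * a⁻¹) := by
  obtain ⟨l, hl, hlen, hprod⟩ := hS.exists_list (b * a⁻¹)
  rw [← hlen] at hab ⊢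
  rw [← inv_mul_cancel_right b a, ← hprod]
  clear hlen hprod
  induction l with
  | nil => simp
  | cons t l ih =>
    have hl' : ∀ x ∈ l, x ∈ S := fun x hx => hl x (List.mem_cons_of_mem t hx)
    rw [List.length_cons] at hab ⊢
    have hla : wordLength S (l.prod * a) + 1 ≤ R :=
      by linarith [hS.wordLength_mul_le l.prod a, wordLength_le_length hl']
    rw [List.prod_cons, mul_assoc]
    exact hconn.dist_triangle.trans (add_le_add (ih (by omega) hl')
      (hball.dist_sigma_mul_le_one hy (hl t List.mem_cons_self) hla))

theorem dist_sigma_eq (hS : IsSymmGenerating S) (hball : A.ContainsBall i R)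
    (hy : y ∈ A.Y i) (hconn : (A.graph i).Connected) {r : ℕ} (hr : 4 * r + 1 ≤ R)
    {a b : Γ} (ha : wordLength S a ≤ r) (hb : wordLength S b ≤ r) :
    (A.graph i).dist (A.sigma i a y) (A.sigma i b y) = wordLength S (b * a⁻¹) := by
  have hba : wordLength S (b * a⁻¹) ≤ 2 * r := by
    linarith [hS.wordLength_mul_le b a⁻¹, hS.wordLength_inv a]
  have hle := hball.dist_sigma_le hS hy hconn (a := a) (b := b) (by omega)
  obtain ⟨w, hw⟩ := hconn.exists_walk_length_eq_dist (A.sigma i a y) (A.sigma i b y)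
  obtain ⟨c, hc, hcb⟩ := hball.exists_eq_sigma_of_walk hS hy w rfl (by omega)
  have hca : c * a = b := hball.sigma_injective hS hy
    (by linarith [hS.wordLength_mul_le c a]) hcb.symm
  subst hca
  rw [mul_inv_cancel_right] at hle ⊢
  omega

theorem exists_eq_mk_sigma (hS : IsSymmGenerating S) (hball : A.ContainsBall i R)
    (hy : y ∈ A.Y i) (hd : A.Admissible d) (hconn : (A.graph i).Connected) {r : ℝ}
    (hiso : A.IsolatedAt d i r) (hr : r + 1 ≤ R) {q : A.Total} (hq : d ⟨i, y⟩ q ≤ r) :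
    ∃ c, (wordLength S c : ℝ) ≤ d ⟨i, y⟩ q ∧ q = ⟨i, A.sigma i c y⟩ := by
  obtain ⟨j, x⟩ := q
  obtain rfl : j = i := hiso y _ hq
  rw [hd.dist_mk] at hq ⊢
  obtain ⟨w, hw⟩ := hconn.exists_walk_length_eq_dist y x
  have hlen : (w.length : ℝ) + 1 ≤ R := by rw [hw]; linarith
  obtain ⟨c, hc, rfl⟩ := hball.exists_eq_sigma_of_walk hS hy w (sigma_one_apply hy).symm
    (by rw [wordLength_one, zero_add]; exact_mod_cast hlen)
  exact ⟨c, by rw [← hw]; exact_mod_cast hc, by rw [mul_one]⟩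

theorem dist_mk_sigma (hS : IsSymmGenerating S) (hball : A.ContainsBall i R)
    (hy : y ∈ A.Y i) (hd : A.Admissible d) (hconn : (A.graph i).Connected) {r : ℕ}
    (hr : 4 * r + 1 ≤ R) {a b : Γ} (ha : wordLength S a ≤ r) (hb : wordLength S b ≤ r) :
    d ⟨i, A.sigma i a y⟩ ⟨i, A.sigma i b y⟩ = wordLength S (b * a⁻¹) := by
  rw [hd.dist_mk, hball.dist_sigma_eq hS hy hconn hr ha hb]

theorem dist_mk_self_sigma (hS : IsSymmGenerating S) (hball : A.ContainsBall i R)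
    (hy : y ∈ A.Y i) (hd : A.Admissible d) (hconn : (A.graph i).Connected) {r : ℕ}
    (hr : 4 * r + 1 ≤ R) {g : Γ} (hg : wordLength S g ≤ r) :
    d ⟨i, y⟩ ⟨i, A.sigma i g y⟩ = wordLength S g := by
  simpa [sigma_one_apply hy] using
    hball.dist_mk_sigma hS hy hd hconn hr (a := 1) (by simp [wordLength_one]) hg

end ContainsBall

variable (A) in
theorem card_compl_Y_le (i : ℕ) : (#(A.Y i)ᶜ.toFinset : ℝ) ≤ A.eps i * Nat.card (A.X i) := by
  have hY := A.Y_large i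
  rw [Nat.card_eq_fintype_card, Set.ncard_eq_toFinset_card'] at hY
  rw [Set.toFinset_compl, card_compl, Nat.card_eq_fintype_card, Nat.cast_sub (card_le_univ _)]
  linarith

variable (A) in
theorem card_sigma_compl_Y_le {I : Finset ℕ} {ε : ℝ} (hε : ∀ i ∈ I, A.eps i ≤ ε) :
    (#(I.sigma fun i => (A.Y i)ᶜ.toFinset) : ℝ) ≤
      ε * #(I.sigma fun i => (univ : Finset (A.X i))) := by
  simp only [card_sigma, Nat.cast_sum, mul_sum, card_univ, ← Nat.card_eq_fintype_card]
  exact sum_le_sum fun i hi => (A.card_compl_Y_le i).trans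
    (mul_le_mul_of_nonneg_right (hε i hi) (Nat.cast_nonneg _))

end SoficApprox

section CoarseMap

variable {Γ : Type u} {Λ : Type v} [Group Γ] [Group Λ] {S : Finset Γ} {T : Finset Λ}
  {A : SoficApprox Γ S} {B : SoficApprox Λ T}

theorem eventually_forall_le_fst (f : A.Total → B.Total) (Θ : ℕ) :
    ∀ᶠ j in atTop, ∀ p : A.Total, (f p).1 = j → Θ ≤ p.1 := by
  have hfin : (⋃ i ∈ Set.Iio Θ, Set.range fun x : A.X i => (f ⟨i, x⟩).1).Finite :=
    (Set.finite_Iio Θ).biUnion fun i _ => Set.finite_range _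
  filter_upwards [Nat.cofinite_eq_atTop ▸ hfin.eventually_cofinite_notMem] with j hj ⟨i, x⟩ hx
  by_contra! hlt
  exact hj (Set.mem_biUnion hlt ⟨x, hx⟩)

variable {dX : A.Total → A.Total → ℝ} {dX' : B.Total → B.Total → ℝ} {f : A.Total → B.Total}

theorem finite_setOf_exists_fst_apply_eq (hdX : A.Admissible dX)
    (hcoarse : ∀ R, ∃ M, ∀ p q, dX' (f p) (f q) ≤ R → dX p q ≤ M) (j : ℕ) :
    {i | ∃ x : A.X i, (f ⟨i, x⟩).1 = j}.Finite := by
  have hfin : {b : B.Total | b.1 = j}.Finite :=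
    (Set.finite_range (Sigma.mk j)).subset (by rintro ⟨j', u⟩ (rfl : j' = j); exact ⟨u, rfl⟩)
  obtain ⟨D, hD⟩ := ((hfin.prod hfin).image fun b => dX' b.1 b.2).bddAbove
  obtain ⟨M, hM⟩ := hcoarse D
  refine (hdX.finite_image_fst (s := {p | (f p).1 = j}) fun p hp q hq =>
    hM p q (hD ⟨(f p, f q), ⟨hp, hq⟩, rfl⟩)).subset ?_
  rintro i ⟨x, hx⟩
  exact ⟨⟨i, x⟩, hx, rfl⟩

theorem eventually_forall_fst_apply_eq (hdX : A.Admissible dX) (hdX' : B.Admissible dX')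
    (hconnA : ∀ i, (A.graph i).Connected)
    (hcoarse : ∀ R, ∃ M, ∀ p q, dX' (f p) (f q) ≤ R → dX p q ≤ M) {C : ℝ}
    (hedge : ∀ i (x y : A.X i), (A.graph i).Adj x y → dX' (f ⟨i, x⟩) (f ⟨i, y⟩) ≤ C) :
    ∀ᶠ i in atTop, ∀ x y : A.X i, (f ⟨i, x⟩).1 = (f ⟨i, y⟩).1 := by
  obtain ⟨N, hN⟩ := hdX'.2.2.2.2.2 C
  have hfin : (⋃ j ∈ Set.Iio N, {i | ∃ x : A.X i, (f ⟨i, x⟩).1 = j}).Finite :=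
    (Set.finite_Iio N).biUnion fun j _ => finite_setOf_exists_fst_apply_eq hdX hcoarse j
  filter_upwards [Nat.cofinite_eq_atTop ▸ hfin.eventually_cofinite_notMem] with i hi x y
  have hadj : ∀ x y, (A.graph i).Adj x y → (f ⟨i, x⟩).1 = (f ⟨i, y⟩).1 := fun x y h => by
    by_contra hne
    have hx : N ≤ (f ⟨i, x⟩).1 := by
      by_contra! hlt
      exact hi (Set.mem_biUnion hlt ⟨x, rfl⟩)
    exact (hN _ _ hne (le_add_right hx) (f ⟨i, x⟩).2 (f ⟨i, y⟩).2).not_ge (hedge i x y h)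
  obtain ⟨w⟩ := hconnA i x y
  induction w with
  | nil => rfl
  | cons h _ ih => exact (hadj _ _ h).trans ih

theorem exists_le_mul_dist_add_one (hdX : A.Admissible dX) (hdX' : B.Admissible dX')
    (hconnB : ∀ j, (B.graph j).Connected)
    (hcoarse : ∀ R, ∃ M, ∀ p q, dX' (f p) (f q) ≤ R → dX p q ≤ M)
    {K₀ : ℝ} (hdense : ∀ q, ∃ p, dX' (f p) q ≤ K₀) :
    ∃ M, 0 < M ∧ ∀ j (u v : B.X j) p q, dX' (f p) ⟨j, u⟩ ≤ K₀ → dX' (f q) ⟨j, v⟩ ≤ K₀ →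
      dX p q ≤ M * (dX' ⟨j, u⟩ ⟨j, v⟩ + 1) := by
  obtain ⟨M, hM⟩ := hcoarse (2 * K₀ + 1)
  refine ⟨max M 1, by positivity, fun j u v p q hp hq => ?_⟩
  rw [hdX'.dist_mk]
  refine (hconnB j).le_mul_dist_add_one hdX.triangle (near := fun p u => dX' (f p) ⟨j, u⟩ ≤ K₀)
    (fun u => hdense _) (fun p q u v hp hq huv => (hM p q ?_).trans (le_max_left _ _)) hp hq
  have huv' : dX' ⟨j, u⟩ ⟨j, v⟩ ≤ 1 := by rw [hdX'.dist_mk]; exact_mod_cast huv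
  linarith [hdX'.triangle (f p) ⟨j, u⟩ (f q), hdX'.triangle ⟨j, u⟩ ⟨j, v⟩ (f q),
    hdX'.comm ⟨j, v⟩ (f q)]

theorem card_filter_apply_eq_le (hdX : A.Admissible dX) (hconnA : ∀ i, (A.graph i).Connected)
    {M₀ : ℝ} (hM₀ : ∀ p q, f p = f q → dX p q ≤ M₀) {s : Finset A.Total}
    (hiso : ∀ p ∈ s, A.IsolatedAt dX p.1 M₀) (q : B.Total) :
    #{p ∈ s | f p = q} ≤ (2 * #S + 1) ^ ⌈M₀⌉₊ := by
  by_cases h : ∃ p₀ ∈ s, f p₀ = q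
  · obtain ⟨p₀, hp₀, rfl⟩ := h
    refine (card_le_card fun p hp => ?_).trans (hdX.card_filter_le hconnA (hiso p₀ hp₀) s)
    obtain ⟨hps, hpq⟩ := mem_filter.1 hp
    exact mem_filter.2 ⟨hps, hM₀ _ _ hpq.symm⟩
  · rw [filter_eq_empty_iff.2 fun p hp hpq => h ⟨p, hp, hpq⟩, card_empty]
    exact Nat.zero_le _

theorem exists_mem_Y_dist_le_of_fst_eq (hdX : A.Admissible dX) (hdX' : B.Admissible dX')
    (hconnA : ∀ i, (A.graph i).Connected) (hconnB : ∀ j, (B.graph j).Connected)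
    {M₀ K₀ ε : ℝ} (hM₀ : ∀ p q, f p = f q → dX p q ≤ M₀) (hdense : ∀ q, ∃ p, dX' (f p) q ≤ K₀)
    {j : ℕ} {I : Finset ℕ} (hI : ∀ p : A.Total, p.1 ∈ I ↔ (f p).1 = j)
    (hepsA : ∀ i ∈ I, A.eps i ≤ ε) (hisoA : ∀ i ∈ I, A.IsolatedAt dX i M₀)
    (hisoB : B.IsolatedAt dX' j K₀) (hε : 0 ≤ ε)
    (hlt : ε * ((2 * #S + 1) ^ ⌈M₀⌉₊ : ℕ) * ((2 * #T + 1) ^ ⌈K₀⌉₊ : ℕ) < 1 - B.eps j) :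
    ∃ i ∈ I, ∃ x ∈ A.Y i, ∃ z ∈ B.Y j, dX' (f ⟨i, x⟩) ⟨j, z⟩ ≤ K₀ := by
  have hQ : ∀ q : B.Total, q.1 = j → q ∈ univ.map (Function.Embedding.sigmaMk j) := by
    rintro ⟨j, z⟩ rfl
    simp
  have hlarge : (1 - B.eps j) * #((univ : Finset (B.X j)).map (Function.Embedding.sigmaMk j)) ≤
      #((B.Y j).toFinset.map (Function.Embedding.sigmaMk j)) := by
    simpa only [card_map, card_univ, ← Nat.card_eq_fintype_card,
      ← Set.ncard_eq_toFinset_card'] using B.Y_large j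
  have hnear : ∀ q ∈ (B.Y j).toFinset.map (Function.Embedding.sigmaMk j),
      ∃ p ∈ I.sigma fun i => univ, dX' (f p) q ≤ K₀ := by
    intro q hq
    obtain ⟨z, -, rfl⟩ := mem_map.1 hq
    obtain ⟨p, hp⟩ := hdense ⟨j, z⟩
    exact ⟨p, mem_sigma.2 ⟨(hI p).2 (hisoB z _ (by rwa [hdX'.comm])), mem_univ _⟩, hp⟩
  obtain ⟨q, hq, ⟨i, x⟩, hp, hpBad, hpq⟩ := exists_near_notMem_of_card
    (P := I.sigma fun i => univ) (Bad := I.sigma fun i => (A.Y i)ᶜ.toFinset)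
    (near := fun p q => dX' (f p) q ≤ K₀) (fun p hp => hQ _ ((hI p).1 (mem_sigma.1 hp).1))
    (fun q _ => card_filter_apply_eq_le hdX hconnA hM₀
      (fun p hp => hisoA _ (mem_sigma.1 hp).1) q)
    (A.card_sigma_compl_Y_le hepsA) hlarge (by simp [Fintype.card_pos]) hnear
    (fun p hp => hdX'.card_filter_le hconnB (by rw [(hI p).1 (mem_sigma.1 hp).1]; exact hisoB) _)
    hε hlt
  obtain ⟨z, hz, rfl⟩ := mem_map.1 hq
  obtain ⟨hi, -⟩ := mem_sigma.1 hp
  refine ⟨i, hi, x, ?_, z, by simpa using hz, hpq⟩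
  by_contra hx
  exact hpBad (mem_sigma.2 ⟨hi, by simpa using hx⟩)

theorem exists_mem_Y_dist_le (hdX : A.Admissible dX) (hdX' : B.Admissible dX')
    (hconnA : ∀ i, (A.graph i).Connected) (hconnB : ∀ j, (B.graph j).Connected)
    (hcoarse : ∀ R, ∃ M, ∀ p q, dX' (f p) (f q) ≤ R → dX p q ≤ M)
    (hconst : ∀ᶠ i in atTop, ∀ x y : A.X i, (f ⟨i, x⟩).1 = (f ⟨i, y⟩).1)
    {K₀ : ℝ} (hdense : ∀ q, ∃ p, dX' (f p) q ≤ K₀)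
    {PA PB : ℕ → Prop} (hPA : ∀ᶠ i in atTop, PA i) (hPB : ∀ᶠ j in atTop, PB j) :
    ∃ i, ∃ x : A.X i, ∃ j, ∃ z : B.X j,
      PA i ∧ x ∈ A.Y i ∧ PB j ∧ z ∈ B.Y j ∧ dX' (f ⟨i, x⟩) ⟨j, z⟩ ≤ K₀ := by
  obtain ⟨M₀, hM₀⟩ := hcoarse 0
  set a := (2 * #S + 1) ^ ⌈M₀⌉₊
  set b := (2 * #T + 1) ^ ⌈K₀⌉₊
  set ε : ℝ := 1 / (4 * a * b) with hε
  have hεpos : 0 < ε := by positivity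
  -- Beyond `Θ` the components are `ε`-good and each is mapped into one component of `X'`;
  -- `j` is so far out that every component over `X' j` lies beyond `Θ`.
  obtain ⟨Θ, hΘ⟩ := eventually_atTop.1 <| hPA.and <| (A.eps_lim.eventually
    (eventually_le_nhds hεpos)).and <| (hdX.eventually_isolatedAt M₀).and hconst
  obtain ⟨j, hPj, hepsj, hisoj, hΘj⟩ := (hPB.and <| (B.eps_lim.eventually
    (eventually_lt_nhds (by norm_num : (0 : ℝ) < 3 / 4))).and <|
    (hdX'.eventually_isolatedAt K₀).and (eventually_forall_le_fst f Θ)).exists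
  set I := (finite_setOf_exists_fst_apply_eq hdX hcoarse j).toFinset
  have hIΘ : ∀ i ∈ I, Θ ≤ i := fun i hi => by
    obtain ⟨x, hx⟩ : ∃ x : A.X i, (f ⟨i, x⟩).1 = j := by simpa [I] using hi
    exact hΘj _ hx
  have hI : ∀ p : A.Total, p.1 ∈ I ↔ (f p).1 = j := by
    rintro ⟨i, x⟩
    refine ⟨fun hi => ?_, fun hx => by simpa [I] using ⟨x, hx⟩⟩
    obtain ⟨y, hy⟩ : ∃ y : A.X i, (f ⟨i, y⟩).1 = j := by simpa [I] using hi
    exact ((hΘ i (hIΘ i hi)).2.2.2 x y).trans hy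
  have hlt : ε * a * b < 1 - B.eps j := by
    have ha : (a : ℝ) ≠ 0 := by positivity
    have hb : (b : ℝ) ≠ 0 := by positivity
    have : ε * a * b = 1 / 4 := by
      rw [hε]
      field_simp
    linarith
  obtain ⟨i, hi, x, hx, z, hz, hxz⟩ := exists_mem_Y_dist_le_of_fst_eq hdX hdX' hconnA hconnB
    (fun p q h => hM₀ p q (by rw [h, hdX'.self_eq_zero])) hdense hI
    (fun i hi => (hΘ i (hIΘ i hi)).2.1) (fun i hi => (hΘ i (hIΘ i hi)).2.2.1) hisoj hεpos.le hlt
  exact ⟨i, x, j, z, (hΘ i (hIΘ i hi)).1, hx, hPj, hz, hxz⟩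

theorem exists_apply_sigma_eq (hS : IsSymmGenerating S) (hT : IsSymmGenerating T)
    (hdX : A.Admissible dX) (hdX' : B.Admissible dX')
    (hconnA : ∀ i, (A.graph i).Connected) (hconnB : ∀ j, (B.graph j).Connected)
    {C K₀ : ℝ} (hC : 0 ≤ C)
    (hLip : ∀ i (x y : A.X i), dX' (f ⟨i, x⟩) (f ⟨i, y⟩) ≤ C * dX ⟨i, x⟩ ⟨i, y⟩)
    {rA rB : ℕ} (hKB : K₀ + C * rA ≤ rB)
    {i : ℕ} {x : A.X i} {j : ℕ} {z : B.X j} (hx : x ∈ A.Y i) (hz : z ∈ B.Y j)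
    (hxz : dX' (f ⟨i, x⟩) ⟨j, z⟩ ≤ K₀)
    (hballA : A.ContainsBall i (4 * rA + 1)) (hballB : B.ContainsBall j (4 * rB + 1))
    (hisoB : B.IsolatedAt dX' j (K₀ + C * rA)) {g : Γ} (hg : wordLength S g ≤ rA) :
    ∃ c, wordLength T c ≤ rB ∧ f ⟨i, A.sigma i g x⟩ = ⟨j, B.sigma j c z⟩ := by
  have hdist : dX' ⟨j, z⟩ (f ⟨i, A.sigma i g x⟩) ≤ K₀ + C * rA := by
    calc _ ≤ dX' ⟨j, z⟩ (f ⟨i, x⟩) + dX' (f ⟨i, x⟩) (f ⟨i, A.sigma i g x⟩) :=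
          hdX'.triangle _ _ _
      _ ≤ K₀ + C * rA := by
          refine add_le_add (by rwa [hdX'.comm]) ((hLip _ _ _).trans ?_)
          rw [hballA.dist_mk_self_sigma hS hx hdX (hconnA i) le_rfl hg]
          gcongr
  obtain ⟨c, hc, hcz⟩ := hballB.exists_eq_mk_sigma hT hz hdX' (hconnB j) hisoB
    (by push_cast; linarith) hdist
  exact ⟨c, Nat.cast_le.1 ((hc.trans hdist).trans hKB), hcz⟩

theorem exists_wordLength_mul_le (hS : IsSymmGenerating S) (hT : IsSymmGenerating T)
    (hdX : A.Admissible dX) (hdX' : B.Admissible dX')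
    (hconnA : ∀ i, (A.graph i).Connected) (hconnB : ∀ j, (B.graph j).Connected)
    {M K₀ : ℝ} (hM : 0 ≤ M)
    (hcoLip : ∀ j (u v : B.X j) p q, dX' (f p) ⟨j, u⟩ ≤ K₀ → dX' (f q) ⟨j, v⟩ ≤ K₀ →
      dX p q ≤ M * (dX' ⟨j, u⟩ ⟨j, v⟩ + 1))
    (hdense : ∀ q, ∃ p, dX' (f p) q ≤ K₀)
    {n rA rB : ℕ} (hMA : M * (n + 1) ≤ rA) (hnB : n ≤ rB)
    {i : ℕ} {x : A.X i} {j : ℕ} {z : B.X j} (hx : x ∈ A.Y i) (hz : z ∈ B.Y j)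
    (hxz : dX' (f ⟨i, x⟩) ⟨j, z⟩ ≤ K₀)
    (hballA : A.ContainsBall i (4 * rA + 1)) (hballB : B.ContainsBall j (4 * rB + 1))
    (hisoA : A.IsolatedAt dX i (M * (n + 1)))
    {c : Γ → Λ} (hcB : ∀ g, wordLength S g ≤ rA → wordLength T (c g) ≤ rB)
    (hc : ∀ g, wordLength S g ≤ rA → f ⟨i, A.sigma i g⁻¹ x⟩ = ⟨j, B.sigma j (c g) z⟩)
    {l : Λ} (hl : wordLength T l ≤ n) :
    ∃ g, (wordLength S g : ℝ) ≤ M * (wordLength T l + 1) ∧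
      (wordLength T (c g * l) : ℝ) ≤ K₀ := by
  have hl' : wordLength T l⁻¹ ≤ rB := by rw [hT.wordLength_inv]; omega
  obtain ⟨p, hp⟩ := hdense ⟨j, B.sigma j l⁻¹ z⟩
  have hxp : dX ⟨i, x⟩ p ≤ M * (wordLength T l + 1) := by
    have := hcoLip j z (B.sigma j l⁻¹ z) ⟨i, x⟩ p hxz hp
    rwa [hballB.dist_mk_self_sigma hT hz hdX' (hconnB j) le_rfl hl', hT.wordLength_inv] at this
  have hxp' : dX ⟨i, x⟩ p ≤ M * (n + 1) := hxp.trans (by gcongr)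
  obtain ⟨a, ha, rfl⟩ := hballA.exists_eq_mk_sigma hS hx hdX (hconnA i) hisoA
    (by push_cast; linarith) hxp'
  have ha' : wordLength S a⁻¹ ≤ rA := by
    rw [hS.wordLength_inv]
    exact_mod_cast (ha.trans hxp').trans hMA
  refine ⟨a⁻¹, by rw [hS.wordLength_inv]; exact ha.trans hxp, ?_⟩
  have hca := hc a⁻¹ ha'
  rw [inv_inv] at hca
  rw [← inv_inv l, ← hballB.dist_mk_sigma hT hz hdX' (hconnB j) le_rfl hl' (hcB _ ha'), ← hca,
    hdX'.comm]
  exact hp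

theorem exists_isQuasiIsometryOn_of_mem_Y (hS : IsSymmGenerating S) (hT : IsSymmGenerating T)
    (hdX : A.Admissible dX) (hdX' : B.Admissible dX')
    (hconnA : ∀ i, (A.graph i).Connected) (hconnB : ∀ j, (B.graph j).Connected)
    {C M K₀ : ℝ} (hC : 0 ≤ C) (hM : 0 ≤ M) (hK₀ : 0 ≤ K₀)
    (hLip : ∀ i (x y : A.X i), dX' (f ⟨i, x⟩) (f ⟨i, y⟩) ≤ C * dX ⟨i, x⟩ ⟨i, y⟩)
    (hcoLip : ∀ j (u v : B.X j) p q, dX' (f p) ⟨j, u⟩ ≤ K₀ → dX' (f q) ⟨j, v⟩ ≤ K₀ →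
      dX p q ≤ M * (dX' ⟨j, u⟩ ⟨j, v⟩ + 1))
    (hdense : ∀ q, ∃ p, dX' (f p) q ≤ K₀)
    {n rA rB : ℕ} (hnA : n ≤ rA) (hMA : M * (n + 1) ≤ rA) (hnB : n ≤ rB)
    (hKB : K₀ + C * rA ≤ rB)
    {i : ℕ} {x : A.X i} {j : ℕ} {z : B.X j} (hx : x ∈ A.Y i) (hz : z ∈ B.Y j)
    (hxz : dX' (f ⟨i, x⟩) ⟨j, z⟩ ≤ K₀)
    (hballA : A.ContainsBall i (4 * rA + 1)) (hballB : B.ContainsBall j (4 * rB + 1))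
    (hisoA : A.IsolatedAt dX i (M * (n + 1))) (hisoB : B.IsolatedAt dX' j (K₀ + C * rA)) :
    ∃ F : Γ → Λ, IsQuasiIsometryOn S T n C M K₀ F := by
  -- `σ(a) x` and `σ(b) x` are `|b a⁻¹|` apart; reading the orbits through `g ↦ σ(g⁻¹) x`
  -- turns this into the left-invariant `|g⁻¹ h|`, hence `F g = (c g)⁻¹` below.
  choose! c hcB hc using fun g (hg : wordLength S g ≤ rA) =>
    exists_apply_sigma_eq hS hT hdX hdX' hconnA hconnB hC hLip hKB hx hz hxz hballA hballB hisoB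
      (g := g⁻¹) (by rwa [hS.wordLength_inv])
  have horbA : ∀ g h, wordLength S g ≤ n → wordLength S h ≤ n →
      dX ⟨i, A.sigma i h⁻¹ x⟩ ⟨i, A.sigma i g⁻¹ x⟩ = wordLength S (g⁻¹ * h) := fun g h hg hh => by
    rw [hballA.dist_mk_sigma hS hx hdX (hconnA i) le_rfl (by rw [hS.wordLength_inv]; omega)
      (by rw [hS.wordLength_inv]; omega), inv_inv]
  have himage : ∀ g h, wordLength S g ≤ n → wordLength S h ≤ n →
      dX' (f ⟨i, A.sigma i h⁻¹ x⟩) (f ⟨i, A.sigma i g⁻¹ x⟩) = wordLength T (c g * (c h)⁻¹) :=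
    fun g h hg hh => by
      rw [hc g (by omega), hc h (by omega), hballB.dist_mk_sigma hT hz hdX' (hconnB j) le_rfl
        (hcB h (by omega)) (hcB g (by omega))]
  refine ⟨fun g => (c g)⁻¹, fun g h hg hh => ?_, fun g h hg hh => ?_, ?_, fun l hl => ?_⟩
  · simpa only [inv_inv, horbA g h hg hh, himage g h hg hh] using
      hLip i (A.sigma i h⁻¹ x) (A.sigma i g⁻¹ x)
  · have := hcoLip j _ _ ⟨i, A.sigma i h⁻¹ x⟩ ⟨i, A.sigma i g⁻¹ x⟩
      (by rw [hc h (by omega), hdX'.self_eq_zero]; exact hK₀)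
      (by rw [hc g (by omega), hdX'.self_eq_zero]; exact hK₀)
    rwa [horbA g h hg hh, ← hc h (by omega), ← hc g (by omega), himage g h hg hh, ← inv_inv (c g)]
      at this
  · have h1 := hc 1 (by simp [wordLength_one])
    rw [inv_one, SoficApprox.sigma_one_apply hx] at h1
    rw [hT.wordLength_inv, ← hballB.dist_mk_self_sigma hT hz hdX' (hconnB j) le_rfl
      (hcB 1 (by simp [wordLength_one])), ← h1, hdX'.comm]
    exact hxz
  · simpa only [inv_inv] using exists_wordLength_mul_le hS hT hdX hdX' hconnA hconnB hM hcoLip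
      hdense hMA hnB hx hz hxz hballA hballB hisoA hcB hc hl

theorem exists_isQuasiIsometryOn (hS : IsSymmGenerating S) (hT : IsSymmGenerating T)
    (hdX : A.Admissible dX) (hdX' : B.Admissible dX')
    (hconnA : ∀ i, (A.graph i).Connected) (hconnB : ∀ j, (B.graph j).Connected)
    {C M K₀ : ℝ} (hC : 0 ≤ C) (hM : 0 ≤ M) (hK₀ : 0 ≤ K₀)
    (hLip : ∀ i (x y : A.X i), dX' (f ⟨i, x⟩) (f ⟨i, y⟩) ≤ C * dX ⟨i, x⟩ ⟨i, y⟩)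
    (hcoLip : ∀ j (u v : B.X j) p q, dX' (f p) ⟨j, u⟩ ≤ K₀ → dX' (f q) ⟨j, v⟩ ≤ K₀ →
      dX p q ≤ M * (dX' ⟨j, u⟩ ⟨j, v⟩ + 1))
    (hcoarse : ∀ R, ∃ M, ∀ p q, dX' (f p) (f q) ≤ R → dX p q ≤ M)
    (hconst : ∀ᶠ i in atTop, ∀ x y : A.X i, (f ⟨i, x⟩).1 = (f ⟨i, y⟩).1)
    (hdense : ∀ q, ∃ p, dX' (f p) q ≤ K₀) (n : ℕ) :
    ∃ F : Γ → Λ, IsQuasiIsometryOn S T n C M K₀ F := by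
  set rA := n + ⌈M * (n + 1)⌉₊
  set rB := n + ⌈K₀ + C * rA⌉₊
  obtain ⟨i, x, j, z, ⟨hballA, hisoA⟩, hx, ⟨hballB, hisoB⟩, hz, hxz⟩ :=
    exists_mem_Y_dist_le hdX hdX' hconnA hconnB hcoarse hconst hdense
      ((A.eventually_containsBall hS (4 * rA + 1)).and (hdX.eventually_isolatedAt (M * (n + 1))))
      ((B.eventually_containsBall hT (4 * rB + 1)).and (hdX'.eventually_isolatedAt (K₀ + C * rA)))
  exact exists_isQuasiIsometryOn_of_mem_Y hS hT hdX hdX' hconnA hconnB hC hM hK₀ hLip hcoLip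
    hdense (Nat.le_add_right _ _) ((Nat.le_ceil _).trans (Nat.cast_le.2 (Nat.le_add_left _ _)))
    (Nat.le_add_right _ _) ((Nat.le_ceil _).trans (Nat.cast_le.2 (Nat.le_add_left _ _)))
    hx hz hxz hballA hballB hisoA hisoB

end CoarseMap

open SoficApprox in
theorem quasiIsometric_of_coarse_equivalence_general
    {Γ : Type u} [Group Γ] {S : Finset Γ}
    {Λ : Type u} [Group Λ] {T : Finset Λ}
    (hSsymm : ∀ s ∈ S, s⁻¹ ∈ S) (hSgen : Subgroup.closure (S : Set Γ) = ⊤)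
    (hTsymm : ∀ t ∈ T, t⁻¹ ∈ T) (hTgen : Subgroup.closure (T : Set Λ) = ⊤)
    (A : SoficApprox Γ S) (B : SoficApprox Λ T)
    (hconnA : ∀ i, (A.graph i).Connected) (hconnB : ∀ i, (B.graph i).Connected)
    (dX : A.Total → A.Total → ℝ) (hdX : A.Admissible dX)
    (dX' : B.Total → B.Total → ℝ) (hdX' : B.Admissible dX')
    (f : A.Total → B.Total)
    (rhoLo rhoHi : ℝ → ℝ)
    (hproper : Filter.Tendsto rhoLo Filter.atTop Filter.atTop)
    (hbound : ∀ p q : A.Total,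
      rhoLo (dX p q) ≤ dX' (f p) (f q) ∧ dX' (f p) (f q) ≤ rhoHi (dX p q))
    (K₀ : ℝ) (hK₀ : 0 ≤ K₀)
    (hdense : ∀ q : B.Total, ∃ p : A.Total, dX' (f p) q ≤ K₀) :
    ∃ (F : Γ → Λ) (C K : ℝ), 1 ≤ C ∧ 0 ≤ K ∧
      (∀ g h : Γ,
        (1 / C) * (wordLength S (g⁻¹ * h) : ℝ) - K ≤ (wordLength T ((F g)⁻¹ * F h) : ℝ) ∧
        (wordLength T ((F g)⁻¹ * F h) : ℝ) ≤ C * (wordLength S (g⁻¹ * h) : ℝ) + K) ∧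
      (∀ l : Λ, ∃ g : Γ, (wordLength T ((F g)⁻¹ * l) : ℝ) ≤ K) := by
  have hS : IsSymmGenerating S := ⟨hSsymm, hSgen⟩
  have hT : IsSymmGenerating T := ⟨hTsymm, hTgen⟩
  set C := max (rhoHi 1) 1
  have hedge : ∀ i (x y : A.X i), (A.graph i).Adj x y → dX' (f ⟨i, x⟩) (f ⟨i, y⟩) ≤ C :=
    fun i x y hxy => by
      have := (hbound ⟨i, x⟩ ⟨i, y⟩).2
      rw [hdX.dist_mk, SimpleGraph.dist_eq_one_iff_adj.2 hxy, Nat.cast_one] at this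
      exact this.trans (le_max_left _ _)
  have hLip : ∀ i (x y : A.X i), dX' (f ⟨i, x⟩) (f ⟨i, y⟩) ≤ C * dX ⟨i, x⟩ ⟨i, y⟩ :=
    fun i x y => by
      rw [hdX.dist_mk]
      exact (hconnA i).le_mul_dist (δ := fun x y => dX' (f ⟨i, x⟩) (f ⟨i, y⟩))
        (fun _ _ _ => hdX'.triangle _ _ _) (fun _ => hdX'.self_eq_zero _) (hedge i) x y
  have hcoarse := exists_le_of_tendsto_atTop hproper fun p q => (hbound p q).1
  obtain ⟨M, hM, hcoLip⟩ := exists_le_mul_dist_add_one hdX hdX' hconnB hcoarse hdense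
  obtain ⟨F, hF⟩ := exists_forall_isQuasiIsometryOn hS hT fun n =>
    exists_isQuasiIsometryOn hS hT hdX hdX' hconnA hconnB (zero_le_one.trans (le_max_right _ _))
      hM.le hK₀ hLip hcoLip hcoarse
      (eventually_forall_fst_apply_eq hdX hdX' hconnA hcoarse hedge) hdense n
  exact ⟨F, IsQuasiIsometryOn.exists_forall_wordLength_le hF hM hK₀⟩

open SoficApprox in
/-- **Coarsely equivalent sofic approximations give quasi-isometric groups.**
If the spaces of graphs of sofic approximations of `Γ = ⟨S⟩` and `Λ = ⟨T⟩` (with connected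
approximating graphs and admissible metrics) are coarsely equivalent, then `Γ` and `Λ`
are quasi-isometric. -/
theorem quasiIsometric_of_coarse_equivalence
    {Γ : Type u} [Group Γ] {S : Finset Γ}
    {Λ : Type u} [Group Λ] {T : Finset Λ}
    (hSsymm : ∀ s ∈ S, s⁻¹ ∈ S) (hSgen : Subgroup.closure (S : Set Γ) = ⊤)
    (hTsymm : ∀ t ∈ T, t⁻¹ ∈ T) (hTgen : Subgroup.closure (T : Set Λ) = ⊤)
    (A : SoficApprox Γ S) (B : SoficApprox Λ T)
    (hconnA : ∀ i, (A.graph i).Connected) (hconnB : ∀ i, (B.graph i).Connected)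
    (dX : A.Total → A.Total → ℝ) (hdX : A.Admissible dX)
    (dX' : B.Total → B.Total → ℝ) (hdX' : B.Admissible dX')
    (f : A.Total → B.Total)
    (rhoLo rhoHi : ℝ → ℝ)
    (hLo : MonotoneOn rhoLo (Set.Ici 0)) (hHi : MonotoneOn rhoHi (Set.Ici 0))
    (hproper : Filter.Tendsto rhoLo Filter.atTop Filter.atTop)
    (hbound : ∀ p q : A.Total,
      rhoLo (dX p q) ≤ dX' (f p) (f q) ∧ dX' (f p) (f q) ≤ rhoHi (dX p q))
    (K₀ : ℝ) (hK₀ : 0 ≤ K₀)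
    (hdense : ∀ q : B.Total, ∃ p : A.Total, dX' (f p) q ≤ K₀) :
    ∃ (F : Γ → Λ) (C K : ℝ), 1 ≤ C ∧ 0 ≤ K ∧
      (∀ g h : Γ,
        (1 / C) * (wordLength S (g⁻¹ * h) : ℝ) - K ≤ (wordLength T ((F g)⁻¹ * F h) : ℝ) ∧
        (wordLength T ((F g)⁻¹ * F h) : ℝ) ≤ C * (wordLength S (g⁻¹ * h) : ℝ) + K) ∧
      (∀ l : Λ, ∃ g : Γ, (wordLength T ((F g)⁻¹ * l) : ℝ) ≤ K) :=
  quasiIsometric_of_coarse_equivalence_general hSsymm hSgen hTsymm hTgen A B hconnA hconnB dX hdX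
    dX' hdX' f rhoLo rhoHi hproper hbound K₀ hK₀ hdense
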